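/- arXiv:2108.10632 — 2 statements merged into one kernel-verified Lean document; each statement's English description precedes it below -/
import Mathlib

section
/- Let μ > 0, n ≥ 2, and x̂₁ < x̂₂ < … < x̂ₙ be real numbers, and set Δ_k = x̂_k − x̂_{k−1} for k = 2, …, n. Define g : ℝ → ℝ by g(y) = 1 − e^{−μ(x̂₁ − y)} for y ≤ x̂₁; g(y) = (1 − e^{−μ(y − x̂_{k−1})})(1 − e^{−μ(x̂_k − y)}) for x̂_{k−1} < y < x̂_k (k = 2, …, n); and g(y) = 1 − e^{−μ(y − x̂ₙ)} for y ≥ x̂ₙ. Then ∫_ℝ (1 − g(y)) dy = 2n/μ − Σ_{k=2}^{n} (2/μ + Δ_k) e^{−μΔ_k}. -/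
/-!
The points `x̂ k` cut the line into two half-lines and `n - 1` bounded intervals, and on each
piece `1 - g` is an explicit exponential expression. On each tail it is `e^{-μ|y - x̂|}`, with
integral `1/μ`. On `(x̂ (k-1), x̂ k)` it is `u + v - uv` with `u = e^{-μ(y - x̂ (k-1))}` and
`v = e^{-μ(x̂ k - y)}`; the product `uv = e^{-μΔ_k}` does not depend on `y`, so the piece
integrates to `2/μ - (2/μ + Δ_k) e^{-μΔ_k}`.
-/

open MeasureTheory Set Real

theorem integral_eq_integral_Iic_add_sum_add_integral_Ioi {E : Type*} [NormedAddCommGroup E]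
    [NormedSpace ℝ E] {ν : Measure ℝ} {f : ℝ → E} {a : ℕ → ℝ} {m : ℕ}
    (hleft : IntegrableOn f (Iic (a 0)) ν)
    (hmid : ∀ k < m, IntervalIntegrable f ν (a k) (a (k + 1)))
    (hright : IntegrableOn f (Ioi (a m)) ν) :
    ∫ x, f x ∂ν = ∫ x in Iic (a 0), f x ∂ν + ∑ k ∈ Finset.range m, ∫ x in a k..a (k + 1), f x ∂ν
      + ∫ x in Ioi (a m), f x ∂ν := by
  have hleft' : IntegrableOn f (Iic (a m)) ν := by
    refine (hleft.union (IntervalIntegrable.trans_iterate hmid).def').mono_set fun x hx => ?_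
    rcases le_or_gt x (a 0) with h | h
    · exact Or.inl h
    · exact Or.inr (Ioc_subset_uIoc ⟨h, hx⟩)
  rw [intervalIntegral.sum_integral_adjacent_intervals hmid,
    ← intervalIntegral.integral_Iic_sub_Iic hleft hleft', add_sub_cancel,
    intervalIntegral.integral_Iic_add_Ioi hleft' hright]

lemma exp_neg_mul_sub_eq (μ c y : ℝ) : exp (-(μ * (y - c))) = exp (μ * c) * exp (-μ * y) := by
  rw [← exp_add]; ring_nf

lemma exp_neg_mul_sub_eq' (μ c y : ℝ) : exp (-(μ * (c - y))) = exp (-μ * c) * exp (μ * y) := by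
  rw [← exp_add]; ring_nf

section ExpDecay

variable {μ : ℝ}

lemma integrableOn_exp_neg_mul_sub_Ioi (hμ : 0 < μ) (c : ℝ) :
    IntegrableOn (fun y ↦ exp (-(μ * (y - c)))) (Ioi c) := by
  rw [funext (exp_neg_mul_sub_eq μ c)]
  exact (integrableOn_exp_mul_Ioi (neg_neg_of_pos hμ) c).const_mul _

lemma integral_exp_neg_mul_sub_Ioi (hμ : 0 < μ) (c : ℝ) :
    ∫ y in Ioi c, exp (-(μ * (y - c))) = 1 / μ := by
  simp only [exp_neg_mul_sub_eq μ c, integral_const_mul, integral_exp_mul_Ioi (neg_neg_of_pos hμ)]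
  rw [neg_div_neg_eq, ← mul_div_assoc, ← exp_add, neg_mul, add_neg_cancel, exp_zero]

lemma integrableOn_exp_neg_mul_sub_Iic (hμ : 0 < μ) (c : ℝ) :
    IntegrableOn (fun y ↦ exp (-(μ * (c - y)))) (Iic c) := by
  rw [funext (exp_neg_mul_sub_eq' μ c)]
  exact (integrableOn_exp_mul_Iic hμ c).const_mul _

lemma integral_exp_neg_mul_sub_Iic (hμ : 0 < μ) (c : ℝ) :
    ∫ y in Iic c, exp (-(μ * (c - y))) = 1 / μ := by
  simp only [exp_neg_mul_sub_eq' μ c, integral_const_mul, integral_exp_mul_Iic hμ]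
  rw [← mul_div_assoc, ← exp_add, neg_mul, neg_add_cancel, exp_zero]

lemma integral_one_sub_mul_one_sub_exp (hμ : μ ≠ 0) (a b : ℝ) :
    ∫ y in a..b, (1 - (1 - exp (-(μ * (y - a)))) * (1 - exp (-(μ * (b - y))))) =
      2 / μ - (2 / μ + (b - a)) * exp (-(μ * (b - a))) := by
  have hderiv : ∀ y, HasDerivAt
      (fun y ↦ (exp (-(μ * (b - y))) - exp (-(μ * (y - a)))) / μ - y * exp (-(μ * (b - a))))
      (1 - (1 - exp (-(μ * (y - a)))) * (1 - exp (-(μ * (b - y))))) y := by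
    intro y
    have hprod : exp (-(μ * (y - a))) * exp (-(μ * (b - y))) = exp (-(μ * (b - a))) := by
      rw [← exp_add]; ring_nf
    have := (((((hasDerivAt_id y).const_sub b).const_mul μ).neg.exp).sub
      ((((hasDerivAt_id y).sub_const a).const_mul μ).neg.exp)).div_const μ |>.sub
      ((hasDerivAt_id y).mul_const (exp (-(μ * (b - a)))))
    refine this.congr_deriv ?_
    simp only [id]
    field_simp
    linear_combination hprod
  rw [intervalIntegral.integral_eq_sub_of_hasDerivAt (fun y _ ↦ hderiv y)
    (by apply Continuous.intervalIntegrable; fun_prop)]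
  simp only [sub_self, mul_zero, neg_zero, exp_zero]
  ring

end ExpDecay

/-- Let `μ > 0`, `n ≥ 2`, `x̂ 0 < x̂ 1 < … < x̂ (n−1)`, and
`Δ_k = x̂ k − x̂ (k−1)`. Let `g` be the piecewise non-blocking probability function:
`g y = 1 − e^{−μ(x̂ 0 − y)}` for `y ≤ x̂ 0`;
`g y = (1 − e^{−μ(y − x̂ (k−1))})(1 − e^{−μ(x̂ k − y)})` for `x̂ (k−1) < y < x̂ k`;
`g y = 1 − e^{−μ(y − x̂ (n−1))}` for `y ≥ x̂ (n−1)`.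
Then `∫_ℝ (1 − g(y)) dy = 2n/μ − Σ_{k=1}^{n−1} (2/μ + Δ_k) e^{−μΔ_k}`. -/
theorem integral_one_sub_nonblocking_n (μ : ℝ) (hμ : 0 < μ)
    (n : ℕ) (hn : 2 ≤ n) (xh : ℕ → ℝ)
    (hmono : ∀ i j, i < j → j < n → xh i < xh j)
    (g : ℝ → ℝ)
    (hg1 : ∀ y, y ≤ xh 0 → g y = 1 - Real.exp (-(μ * (xh 0 - y))))
    (hg2 : ∀ k, 1 ≤ k → k < n → ∀ y, xh (k - 1) < y → y < xh k →
        g y = (1 - Real.exp (-(μ * (y - xh (k - 1)))))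
              * (1 - Real.exp (-(μ * (xh k - y)))))
    (hg3 : ∀ y, xh (n - 1) ≤ y → g y = 1 - Real.exp (-(μ * (y - xh (n - 1))))) :
    ∫ y : ℝ, (1 - g y)
      = 2 * n / μ
        - ∑ k ∈ Finset.Ico 1 n,
            (2 / μ + (xh k - xh (k - 1))) * Real.exp (-(μ * (xh k - xh (k - 1)))) := by
  have hleft : EqOn (fun y ↦ 1 - g y) (fun y ↦ exp (-(μ * (xh 0 - y)))) (Iic (xh 0)) :=
    fun y hy ↦ by simp [hg1 y hy]
  have hright : EqOn (fun y ↦ 1 - g y) (fun y ↦ exp (-(μ * (y - xh (n - 1)))))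
      (Ioi (xh (n - 1))) :=
    fun y hy ↦ by simp [hg3 y (le_of_lt hy)]
  have hmid : ∀ k < n - 1, EqOn (fun y ↦ 1 - g y)
      (fun y ↦ 1 - (1 - exp (-(μ * (y - xh k)))) * (1 - exp (-(μ * (xh (k + 1) - y)))))
      (uIoo (xh k) (xh (k + 1))) := by
    intro k hk y hy
    rw [uIoo_of_le (hmono k (k + 1) (by omega) (by omega)).le] at hy
    simpa using hg2 (k + 1) (by omega) (by omega) y hy.1 hy.2
  rw [integral_eq_integral_Iic_add_sum_add_integral_Ioi (a := xh) (m := n - 1)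
      ((integrableOn_exp_neg_mul_sub_Iic hμ _).congr_fun hleft.symm measurableSet_Iic)
      (fun k hk ↦ (intervalIntegrable_congr_uIoo (hmid k hk)).2
        (by apply Continuous.intervalIntegrable; fun_prop))
      ((integrableOn_exp_neg_mul_sub_Ioi hμ _).congr_fun hright.symm measurableSet_Ioi),
    setIntegral_congr_fun measurableSet_Iic hleft, setIntegral_congr_fun measurableSet_Ioi hright,
    integral_exp_neg_mul_sub_Iic hμ, integral_exp_neg_mul_sub_Ioi hμ,
    Finset.sum_congr rfl fun k hk ↦ (intervalIntegral.integral_congr_uIoo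
      (hmid k (Finset.mem_range.1 hk))).trans (integral_one_sub_mul_one_sub_exp hμ.ne' _ _),
    Finset.sum_sub_distrib, Finset.sum_const, Finset.card_range, nsmul_eq_mul,
    Finset.sum_Ico_eq_sum_range, Nat.cast_pred (by omega)]
  simp only [add_comm 1, Nat.add_sub_cancel]
  ring
end

section
/- Consider the window obstacle model on [−L/2, L/2] with intensity λ > 0 and rate μ > 0: N is a Poisson random variable with mean λL; (Y_j)_{j≥1} are i.i.d. uniform on [−L/2, L/2]; (V_j)_{j≥1} and (W_j)_{j≥1} are i.i.d. exponential with rate μ; and N, (Y_j), (V_j), (W_j) are mutually independent; obstacle j is the segment [Y_j − V_j, Y_j + W_j]. Let x̂₁ < x̂₂ be real numbers and define g : ℝ → ℝ by g(y) = 1 − e^{−μ(x̂₁ − y)} for y ≤ x̂₁; g(y) = (1 − e^{−μ(y − x̂₁)})(1 − e^{−μ(x̂₂ − y)}) for x̂₁ < y < x̂₂; and g(y) = 1 − e^{−μ(y − x̂₂)} for y ≥ x̂₂. Then the probability that no obstacle j ≤ N covers x̂₁ and no obstacle j ≤ N covers x̂₂ equals exp(−λ ∫_{−L/2}^{L/2}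 (1 − g(y)) dy). -/
open MeasureTheory ProbabilityTheory

/-- Codomain family for the joint family consisting of the Poisson count `N`
(index `none`) and the real random variables `Y j`, `V j`, `W j` (indices `some (j, 0)`,
`some (j, 1)`, `some (j, 2)`). -/
def WindowObstacleFam : Option (ℕ × Fin 3) → Type
  | none => ℕ
  | some _ => ℝ

instance : ∀ i, MeasurableSpace (WindowObstacleFam i)
  | none => inferInstanceAs (MeasurableSpace ℕ)
  | some _ => inferInstanceAs (MeasurableSpace ℝ)

/-- The joint family `{N, Y 0, V 0, W 0, Y 1, V 1, W 1, …}`. -/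
def windowObstacleFun {Ω : Type*} (N : Ω → ℕ) (Y V W : ℕ → Ω → ℝ) :
    ∀ i : Option (ℕ × Fin 3), Ω → WindowObstacleFam i
  | none => N
  | some (j, k) => ![Y j, V j, W j] k

/-!
`N` is independent of the obstacles, which are independent of each other, so on `{N = n}` the
event is an intersection of `n` independent events of a common probability `q`, and its
probability is `E[q^N] = exp (-λL (1 - q))` for the Poisson count. Given its centre `y`, an
obstacle misses both points exactly when its exponential half-lengths lie in a product of
half-lines, which has probability `g y`; averaging over the uniform centre gives
`L (1 - q) = ∫_{-L/2}^{L/2} (1 - g)`.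
-/

open Set Real
open scoped NNReal Nat

namespace ProbabilityTheory

instance nullSingletonClass_expMeasure (r : ℝ) : NullSingletonClass (expMeasure r) := by
  unfold expMeasure gammaMeasure; infer_instance

lemma ae_nonneg_expMeasure {r : ℝ} (hr : 0 < r) : ∀ᵐ v ∂expMeasure r, 0 ≤ v := by
  have := isProbabilityMeasure_expMeasure hr
  refine ae_iff.2 (measure_mono_null
    (show {v : ℝ | ¬0 ≤ v} ⊆ Iic 0 from fun v hv => (not_le.1 hv).le) ?_)
  rw [← ofReal_cdf, cdf_expMeasure_eq hr]
  simp

lemma expMeasure_real_Iio {r : ℝ} (hr : 0 < r) (x : ℝ) :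
    (expMeasure r).real (Iio x) = if 0 ≤ x then 1 - exp (-(r * x)) else 0 := by
  have := isProbabilityMeasure_expMeasure hr
  rw [measureReal_congr Iio_ae_eq_Iic, ← cdf_eq_real, cdf_expMeasure_eq hr]

lemma tsum_poissonMeasure_singleton_mul_pow (r : ℝ≥0) {q : ℝ} (hq : 0 ≤ q) :
    ∑' n, poissonMeasure r {n} * ENNReal.ofReal q ^ n
      = ENNReal.ofReal (exp (-(r * (1 - q)))) := by
  have hsum : HasSum (fun n : ℕ => exp (-r) * r ^ n / n ! * q ^ n) (exp (-(r * (1 - q)))) := by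
    convert! (NormedSpace.expSeries_div_hasSum_exp ((r : ℝ) * q)).mul_left (exp (-r)) using 1
    · ext n; ring
    · rw [← exp_eq_exp_ℝ, ← exp_add]; ring_nf
  rw [← hsum.tsum_eq, ENNReal.ofReal_tsum_of_nonneg (fun n => by positivity) hsum.summable]
  congr 1 with n
  rw [poissonMeasure_singleton, ← ENNReal.ofReal_pow hq, ← ENNReal.ofReal_mul (by positivity)]

variable {Ω ι κ : Type*} {mΩ : MeasurableSpace Ω} {P : Measure Ω}

theorem measure_forall_lt_eq_exp_of_poisson [IsProbabilityMeasure P] {N : Ω → ℕ}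
    {A : ℕ → Set Ω} {r : ℝ≥0} {q : ℝ} (hNm : Measurable N) (hAm : ∀ j, MeasurableSet (A j))
    (hN : P.map N = poissonMeasure r) (hA : ∀ j, P.real (A j) = q)
    (hNA : Indep (MeasurableSpace.comap N inferInstance)
      (⨆ j, MeasurableSpace.generateFrom {A j}) P)
    (hAA : iIndepSet A P) :
    P {ω | ∀ j < N ω, ω ∈ A j} = ENNReal.ofReal (exp (-(r * (1 - q)))) := by
  have hq : 0 ≤ q := hA 0 ▸ measureReal_nonneg
  have hdecomp : {ω | ∀ j < N ω, ω ∈ A j} = ⋃ n, N ⁻¹' {n} ∩ ⋂ j ∈ Finset.range n, A j := by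
    ext ω
    simp
  have hterm (n : ℕ) : P (N ⁻¹' {n} ∩ ⋂ j ∈ Finset.range n, A j)
      = poissonMeasure r {n} * ENNReal.ofReal q ^ n := by
    have hB : MeasurableSet[⨆ j, MeasurableSpace.generateFrom {A j}] (⋂ j ∈ Finset.range n, A j) :=
      Finset.measurableSet_biInter _ fun j _ =>
        le_iSup (fun j => MeasurableSpace.generateFrom {A j}) j _
          (MeasurableSpace.measurableSet_generateFrom rfl)
    rw [(Indep_iff _ _ _).1 hNA _ _ (measurableSet_preimage (comap_measurable N) (.singleton n)) hB,
      ← Measure.map_apply hNm (.singleton n), hN, hAA.meas_biInter]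
    simp [← ofReal_measureReal, hA]
  rw [hdecomp, measure_iUnion
    (fun m n hmn => (pairwise_disjoint_fiber N hmn).mono inter_subset_left inter_subset_left)
    fun n => (hNm (.singleton n)).inter (Finset.measurableSet_biInter _ fun j _ => hAm j)]
  simp_rw [hterm]
  exact tsum_poissonMeasure_singleton_mul_pow r hq

theorem iIndep_biSup_of_pairwise_disjoint {m : ι → MeasurableSpace Ω} (h_le : ∀ i, m i ≤ mΩ)
    (h : iIndep m P) {G : κ → Set ι} (hG : Pairwise (Function.onFun Disjoint G)) :
    iIndep (fun k => ⨆ i ∈ G k, m i) P := by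
  classical
  refine (iIndep_iff _ _).2 fun s => ?_
  induction s using Finset.induction_on with
  | empty => have := h.isProbabilityMeasure; simp
  | insert a s ha ih =>
    intro f hf
    have hrest : MeasurableSet[⨆ i ∈ ⋃ k ∈ s, G k, m i] (⋂ k ∈ s, f k) :=
      Finset.measurableSet_biInter _ fun k hk => biSup_mono (f := m)
        (subset_biUnion_of_mem (u := G) hk) _ (hf k (Finset.mem_insert_of_mem hk))
    have hdisj : Disjoint (G a) (⋃ k ∈ s, G k) :=
      disjoint_iUnion₂_right.2 fun k hk => hG (ne_of_mem_of_not_mem hk ha).symm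
    rw [Finset.set_biInter_insert, Finset.prod_insert ha, (Indep_iff _ _ _).1
      (indep_iSup_of_disjoint h_le h hdisj) _ _ (hf a (Finset.mem_insert_self a s)) hrest,
      ih fun k hk => hf k (Finset.mem_insert_of_mem hk)]

variable {β : ι → Type*} {mβ : ∀ i, MeasurableSpace (β i)} {f : ∀ i, Ω → β i}

lemma iIndepFun.map_prodMk_prodMk_eq [IsFiniteMeasure P] (h : iIndepFun f P)
    (hf : ∀ i, Measurable (f i)) {i j k : ι} (hij : i ≠ j) (hik : i ≠ k) (hjk : j ≠ k) :
    P.map (fun ω => (f i ω, f j ω, f k ω))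
      = (P.map (f i)).prod ((P.map (f j)).prod (P.map (f k))) := by
  rw [(h.indepFun_prodMk hf j k i hij.symm hik.symm).symm.map_prod_eq_prod_map_map
    (hf i).aemeasurable ((hf j).prodMk (hf k)).aemeasurable,
    (h.indepFun hjk).map_prod_eq_prod_map_map (hf j).aemeasurable (hf k).aemeasurable]

end ProbabilityTheory

namespace MeasureTheory

variable {Ω α β : Type*} {mΩ : MeasurableSpace Ω} {mα : MeasurableSpace α}
  {mβ : MeasurableSpace β} {P : Measure Ω} {ν : Measure α} {ρ : Measure β} [IsFiniteMeasure ρ]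

lemma measureReal_preimage_eq_integral_of_map_eq_prod {Z : Ω → α × β} (hZ : Measurable Z)
    (hlaw : P.map Z = ν.prod ρ) {C : Set (α × β)} (hC : MeasurableSet C) :
    P.real (Z ⁻¹' C) = ∫ y, ρ.real (Prod.mk y ⁻¹' C) ∂ν := by
  simp_rw [measureReal_def]
  rw [← Measure.map_apply hZ hC, hlaw, Measure.prod_apply hC, integral_toReal
    (measurable_measure_prodMk_left hC).aemeasurable (ae_of_all _ fun _ => measure_lt_top _ _)]

lemma integrable_measureReal_prodMk_left [IsFiniteMeasure ν] {C : Set (α × β)}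
    (hC : MeasurableSet C) : Integrable (fun y => ρ.real (Prod.mk y ⁻¹' C)) ν :=
  .of_bound (measurable_measure_prodMk_left hC).ennreal_toReal.aestronglyMeasurable (ρ.real univ)
    (ae_of_all _ fun _ => by
      rw [Real.norm_of_nonneg measureReal_nonneg]; exact measureReal_mono (subset_univ _))

end MeasureTheory

lemma setIntegral_Icc_eq_sub_intervalIntegral_one_sub {a b : ℝ} (hab : a ≤ b) {g : ℝ → ℝ}
    (hg : IntegrableOn g (Icc a b)) :
    ∫ y in Icc a b, g y = b - a - ∫ y in a..b, (1 - g y) := by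
  rw [intervalIntegral.integral_sub intervalIntegrable_const
    ((intervalIntegrable_iff_integrableOn_Icc_of_le hab).2 hg), intervalIntegral.integral_const,
    intervalIntegral.integral_of_le hab, integral_Icc_eq_integral_Ioc]
  simp

/-- The triple `(y, v, w)` encodes the obstacle `[y - v, y + w]`. -/
def obstaclesAvoiding (x₁ x₂ : ℝ) : Set (ℝ × ℝ × ℝ) :=
  {q | ¬ (q.1 - q.2.1 ≤ x₁ ∧ x₁ ≤ q.1 + q.2.2) ∧ ¬ (q.1 - q.2.1 ≤ x₂ ∧ x₂ ≤ q.1 + q.2.2)}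

lemma measurableSet_obstaclesAvoiding (x₁ x₂ : ℝ) : MeasurableSet (obstaclesAvoiding x₁ x₂) := by
  unfold obstaclesAvoiding
  measurability

lemma measureReal_expMeasure_prod_congr_of_nonneg {r r' : ℝ} (hr : 0 < r) (hr' : 0 < r')
    {s t : Set (ℝ × ℝ)}
    (h : ∀ v w, 0 ≤ v → 0 ≤ w → ((v, w) ∈ s ↔ (v, w) ∈ t)) :
    ((expMeasure r).prod (expMeasure r')).real s
      = ((expMeasure r).prod (expMeasure r')).real t := by
  refine measureReal_congr (Filter.eventuallyEq_set.2 ?_)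
  filter_upwards [Measure.quasiMeasurePreserving_fst.ae (ae_nonneg_expMeasure hr),
    Measure.quasiMeasurePreserving_snd.ae (ae_nonneg_expMeasure hr')] with p hv hw
  exact h p.1 p.2 hv hw

lemma measureReal_expMeasure_prod_preimage_obstaclesAvoiding {μ x₁ x₂ : ℝ} (hμ : 0 < μ)
    (h12 : x₁ < x₂) (g : ℝ → ℝ)
    (hg1 : ∀ y, y ≤ x₁ → g y = 1 - exp (-(μ * (x₁ - y))))
    (hg2 : ∀ y, x₁ < y → y < x₂ →
      g y = (1 - exp (-(μ * (y - x₁)))) * (1 - exp (-(μ * (x₂ - y)))))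
    (hg3 : ∀ y, x₂ ≤ y → g y = 1 - exp (-(μ * (y - x₂)))) (y : ℝ) :
    ((expMeasure μ).prod (expMeasure μ)).real (Prod.mk y ⁻¹' obstaclesAvoiding x₁ x₂)
      = g y := by
  have := isProbabilityMeasure_expMeasure hμ
  -- Since `v, w ≥ 0` almost surely, in each regime of `y` the event is a product of half-lines.
  rcases le_or_gt y x₁ with hy1 | hy1
  · rw [measureReal_expMeasure_prod_congr_of_nonneg hμ hμ (t := univ ×ˢ Iio (x₁ - y)) ?_,
      measureReal_prod_prod, probReal_univ, one_mul, expMeasure_real_Iio hμ,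
      if_pos (by linarith), hg1 y hy1]
    intro v w hv hw
    grind [obstaclesAvoiding]
  rcases lt_or_ge y x₂ with hy2 | hy2
  · rw [measureReal_expMeasure_prod_congr_of_nonneg hμ hμ
        (t := Iio (y - x₁) ×ˢ Iio (x₂ - y)) ?_, measureReal_prod_prod,
      expMeasure_real_Iio hμ, expMeasure_real_Iio hμ, if_pos (by linarith), if_pos (by linarith),
      hg2 y hy1 hy2]
    intro v w hv hw
    grind [obstaclesAvoiding]
  · rw [measureReal_expMeasure_prod_congr_of_nonneg hμ hμ (t := Iio (y - x₂) ×ˢ univ) ?_,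
      measureReal_prod_prod, probReal_univ, mul_one, expMeasure_real_Iio hμ,
      if_pos (by linarith), hg3 y hy2]
    intro v w hv hw
    grind [obstaclesAvoiding]

def obstacleTriple {Ω : Type*} (Y V W : ℕ → Ω → ℝ) (j : ℕ) (ω : Ω) : ℝ × ℝ × ℝ :=
  (Y j ω, V j ω, W j ω)

section WindowModel

variable {Ω : Type*} {mΩ : MeasurableSpace Ω} {P : Measure Ω} {N : Ω → ℕ} {Y V W : ℕ → Ω → ℝ}

local notation "𝓕" => fun i => MeasurableSpace.comap (windowObstacleFun N Y V W i) inferInstance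

lemma measurable_windowObstacleFun (hN : Measurable N) (hY : ∀ j, Measurable (Y j))
    (hV : ∀ j, Measurable (V j)) (hW : ∀ j, Measurable (W j)) :
    ∀ i, Measurable (windowObstacleFun N Y V W i)
  | none => hN
  | some (j, 0) => hY j
  | some (j, 1) => hV j
  | some (j, 2) => hW j

lemma measurable_obstacleTriple_biSup (j : ℕ) :
    Measurable[⨆ i ∈ range fun k : Fin 3 => some (j, k), 𝓕 i] (obstacleTriple Y V W j) := by
  have hk (k : Fin 3) := (comap_measurable (windowObstacleFun N Y V W (some (j, k)))).mono
    (le_iSup₂ (f := fun i (_ : i ∈ range fun k : Fin 3 => some (j, k)) => 𝓕 i) _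
      (mem_range_self k)) le_rfl
  exact (hk 0).prodMk ((hk 1).prodMk (hk 2))

variable (hN : Measurable N) (hY : ∀ j, Measurable (Y j)) (hV : ∀ j, Measurable (V j))
  (hW : ∀ j, Measurable (W j)) (hindep : iIndepFun (windowObstacleFun N Y V W) P)
include hN hY hV hW hindep

lemma indep_comap_iSup_preimage_obstacleTriple {C : Set (ℝ × ℝ × ℝ)} (hC : MeasurableSet C) :
    Indep (MeasurableSpace.comap N inferInstance)
      (⨆ j, MeasurableSpace.generateFrom {obstacleTriple Y V W j ⁻¹' C}) P := by
  have hf := measurable_windowObstacleFun hN hY hV hW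
  have hdisj : Disjoint {none} (range (some : ℕ × Fin 3 → _)) := by simp
  refine indep_of_indep_of_le (indep_iSup_of_disjoint (fun i => (hf i).comap_le)
    ((iIndepFun_iff_iIndep _ _ _).1 hindep) hdisj) ?_ (iSup_le fun j => ?_)
  · exact le_iSup₂ (f := fun i (_ : i ∈ ({none} : Set _)) => 𝓕 i) none rfl
  · refine MeasurableSpace.generateFrom_le fun s hs => ?_
    rw [mem_singleton_iff.1 hs]
    exact biSup_mono (f := 𝓕) (fun _ ⟨k, hk⟩ => ⟨(j, k), hk⟩) _
      (measurable_obstacleTriple_biSup j hC)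

lemma iIndepSet_preimage_obstacleTriple {C : Set (ℝ × ℝ × ℝ)} (hC : MeasurableSet C) :
    iIndepSet (fun j => obstacleTriple Y V W j ⁻¹' C) P := by
  have hf := measurable_windowObstacleFun hN hY hV hW
  refine iIndep_of_iIndep_of_le (iIndep_biSup_of_pairwise_disjoint (fun i => (hf i).comap_le)
    ((iIndepFun_iff_iIndep _ _ _).1 hindep) (G := fun j => range fun k : Fin 3 => some (j, k)) ?_)
    fun j => MeasurableSpace.generateFrom_le fun s hs => ?_
  · intro j j' hjj'
    simp [Function.onFun, disjoint_range_iff, hjj']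
  · rw [mem_singleton_iff.1 hs]
    exact measurable_obstacleTriple_biSup j hC

lemma map_obstacleTriple [IsFiniteMeasure P] (j : ℕ) :
    P.map (obstacleTriple Y V W j) = (P.map (Y j)).prod ((P.map (V j)).prod (P.map (W j))) :=
  hindep.map_prodMk_prodMk_eq (measurable_windowObstacleFun hN hY hV hW)
    (i := some (j, 0)) (j := some (j, 1)) (k := some (j, 2)) (by simp) (by simp) (by simp)

end WindowModel

/-- Window obstacle model on `[−L/2, L/2]` with intensity `λ` and rate `μ`.
Let `x̂₁ < x̂₂` and let `g` be the piecewise two-point non-blocking probability function.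
Then the probability that no obstacle `j < N` covers `x̂₁` and no obstacle `j < N` covers `x̂₂`
equals `exp(−λ ∫_{−L/2}^{L/2} (1 − g(y)) dy)`. -/
theorem window_LOS_prob_two_points
    {Ω : Type*} [MeasurableSpace Ω] (P : Measure Ω) [IsProbabilityMeasure P]
    (lam μ L : ℝ) (hlam : 0 < lam) (hμ : 0 < μ) (hL : 0 < L)
    (N : Ω → ℕ) (Y V W : ℕ → Ω → ℝ)
    (hNmeas : Measurable N) (hYmeas : ∀ j, Measurable (Y j))
    (hVmeas : ∀ j, Measurable (V j)) (hWmeas : ∀ j, Measurable (W j))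
    (hN : Measure.map N P = poissonMeasure (lam * L).toNNReal)
    (hY : ∀ j, Measure.map (Y j) P
        = (ENNReal.ofReal L)⁻¹ • (volume.restrict (Set.Icc (-(L / 2)) (L / 2))))
    (hV : ∀ j, Measure.map (V j) P = expMeasure μ)
    (hW : ∀ j, Measure.map (W j) P = expMeasure μ)
    (hindep : iIndepFun (windowObstacleFun N Y V W) P)
    (xh₁ xh₂ : ℝ) (h12 : xh₁ < xh₂)
    (g : ℝ → ℝ)
    (hg1 : ∀ y, y ≤ xh₁ → g y = 1 - Real.exp (-(μ * (xh₁ - y))))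
    (hg2 : ∀ y, xh₁ < y → y < xh₂ →
        g y = (1 - Real.exp (-(μ * (y - xh₁)))) * (1 - Real.exp (-(μ * (xh₂ - y)))))
    (hg3 : ∀ y, xh₂ ≤ y → g y = 1 - Real.exp (-(μ * (y - xh₂)))) :
    P {ω | ∀ j < N ω,
          ¬ (Y j ω - V j ω ≤ xh₁ ∧ xh₁ ≤ Y j ω + W j ω)
          ∧ ¬ (Y j ω - V j ω ≤ xh₂ ∧ xh₂ ≤ Y j ω + W j ω)}
      = ENNReal.ofReal (Real.exp (-(lam * ∫ y in -(L / 2)..(L / 2), (1 - g y)))) := by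
  have := isProbabilityMeasure_expMeasure hμ
  have hC := measurableSet_obstaclesAvoiding xh₁ xh₂
  have hT (j : ℕ) : Measurable (obstacleTriple Y V W j) :=
    (hYmeas j).prodMk ((hVmeas j).prodMk (hWmeas j))
  have hg : g = fun y => ((expMeasure μ).prod (expMeasure μ)).real
      (Prod.mk y ⁻¹' obstaclesAvoiding xh₁ xh₂) :=
    funext fun y =>
      (measureReal_expMeasure_prod_preimage_obstaclesAvoiding hμ h12 g hg1 hg2 hg3 y).symm
  have hgint : IntegrableOn g (Icc (-(L / 2)) (L / 2)) :=
    hg ▸ integrable_measureReal_prodMk_left hC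
  have hA (j : ℕ) : P.real (obstacleTriple Y V W j ⁻¹' obstaclesAvoiding xh₁ xh₂)
      = 1 - L⁻¹ * ∫ y in -(L / 2)..(L / 2), (1 - g y) := by
    rw [measureReal_preimage_eq_integral_of_map_eq_prod (hT j)
      (by rw [map_obstacleTriple hNmeas hYmeas hVmeas hWmeas hindep, hY, hV, hW]) hC,
      integral_smul_measure, ← hg,
      setIntegral_Icc_eq_sub_intervalIntegral_one_sub (by linarith) hgint]
    simp [hL.le, mul_sub, hL.ne']
  calc _ = P {ω | ∀ j < N ω, ω ∈ obstacleTriple Y V W j ⁻¹' obstaclesAvoiding xh₁ xh₂} := rfl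
    _ = _ := measure_forall_lt_eq_exp_of_poisson hNmeas (fun j => hT j hC) hN hA
          (indep_comap_iSup_preimage_obstacleTriple hNmeas hYmeas hVmeas hWmeas hindep hC)
          (iIndepSet_preimage_obstacleTriple hNmeas hYmeas hVmeas hWmeas hindep hC)
    _ = _ := by
      rw [Real.coe_toNNReal _ (by positivity)]
      congr 3
      field_simp
      ring
end
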